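/- For the Poisson distribution of order k with λ > 1, the sequence P_x is strictly increasing for 0 ≤ x ≤ (λ−1)k(k+1)/2 + 1; equivalently Δ_x = P_x − P_{x−1} > 0 for 1 ≤ x ≤ (λ−1)k(k+1)/2 + 1. -/

import Mathlib

open scoped BigOperators
open Real

/-- The pmf of the Poisson distribution of order `k` with parameter `lam`,
indexed by `x : ℤ` (it vanishes for `x < 0`):
`f_k(x;λ) = Σ e^{-kλ} λ^{x₁+⋯+x_k}/(x₁!⋯x_k!)` summed over all `k`-tuples of
nonnegative integers with `x₁ + 2x₂ + ⋯ + k x_k = x`. -/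
noncomputable def poissonOrderK (k : ℕ) (lam : ℝ) (x : ℤ) : ℝ :=
  ∑' t : Fin k → ℕ,
    if ((∑ i : Fin k, ((i : ℕ) + 1) * t i : ℕ) : ℤ) = x then
      Real.exp (-(k * lam)) * lam ^ (∑ i : Fin k, t i) /
        ∏ i : Fin k, (Nat.factorial (t i) : ℝ)
    else 0

/-- The difference `Δ_x = P_x - P_{x-1}`. -/
noncomputable def deltaOrderK (k : ℕ) (lam : ℝ) (x : ℤ) : ℝ :=
  poissonOrderK k lam x - poissonOrderK k lam (x - 1)

/-!
Lowering the coordinate `t_j` of a tuple by one maps the tuples of weight `x` with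
`t_j ≥ 1` bijectively onto the tuples of weight `x - j`, and turns `t_j · term(t)` into
`λ · term`; since `x = Σ j t_j`, this gives the recurrence `x P_x = λ Σ_{j=1}^k j P_{x-j}`.
Subtracting it at `x - 1` and multiplying by `S = k(k+1)/2` yields
`S x Δ_x = ((λ-1)S - (x-1)) P_{x-1} + λ Σ_{j=1}^k (S + j) (P_{x-1-j} - P_{x-1-k})`.
Argue by strong induction on `x`: the bound on `x` makes the first coefficient nonnegative,
and the induction hypothesis makes `P` nondecreasing up to `x - 1`, so every summand is
nonnegative. For `x = 1` the first term is positive; for `x ≥ 2` the summand `j = 1` is,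
since `P_{x-1-k} ≤ P_{x-3} < P_{x-2}`.
-/

open Finset

namespace PoissonOrderK

variable {k : ℕ}

def weight (t : Fin k → ℕ) : ℕ := ∑ i : Fin k, ((i : ℕ) + 1) * t i

noncomputable def term (k : ℕ) (lam : ℝ) (t : Fin k → ℕ) : ℝ :=
  Real.exp (-(k * lam)) * lam ^ (∑ i : Fin k, t i) / ∏ i : Fin k, ((t i).factorial : ℝ)

theorem poissonOrderK_eq_tsum (k : ℕ) (lam : ℝ) (x : ℤ) :
    poissonOrderK k lam x
      = ∑' t : Fin k → ℕ, if (weight t : ℤ) = x then term k lam t else 0 :=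
  rfl

theorem apply_le_weight (t : Fin k → ℕ) (i : Fin k) : t i ≤ weight t :=
  calc t i ≤ ((i : ℕ) + 1) * t i := Nat.le_mul_of_pos_left _ i.val.succ_pos
    _ ≤ weight t := single_le_sum (f := fun j : Fin k => ((j : ℕ) + 1) * t j)
      (fun _ _ => Nat.zero_le _) (mem_univ i)

theorem weight_eq_zero_iff {t : Fin k → ℕ} : weight t = 0 ↔ t = 0 := by
  simp [weight, Finset.sum_eq_zero_iff, funext_iff]

theorem weight_add_single (s : Fin k → ℕ) (i : Fin k) :
    weight (s + Pi.single i 1) = weight s + ((i : ℕ) + 1) := by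
  simp [weight, mul_add, sum_add_distrib, Pi.single_apply]

theorem finite_setOf_weight_eq (x : ℤ) : {t : Fin k → ℕ | (weight t : ℤ) = x}.Finite :=
  (Set.finite_Iic fun _ => x.toNat).subset fun t (ht : (weight t : ℤ) = x) i => by
    have := apply_le_weight t i
    show t i ≤ x.toNat
    omega

theorem summable_ite_weight_eq (x : ℤ) (f : (Fin k → ℕ) → ℝ) :
    Summable fun t => if (weight t : ℤ) = x then f t else 0 :=
  summable_of_hasFiniteSupport <| (finite_setOf_weight_eq x).subset fun _ ht => by
    by_contra h
    exact ht (if_neg h)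

theorem term_add_single (lam : ℝ) (s : Fin k → ℕ) (i : Fin k) :
    ((s i : ℝ) + 1) * term k lam (s + Pi.single i 1) = lam * term k lam s := by
  have hsum : ∑ j, (s + Pi.single i 1 : Fin k → ℕ) j = ∑ j, s j + 1 := by
    simp [sum_add_distrib]
  have hprod : ∏ j, (((s + Pi.single i 1 : Fin k → ℕ) j).factorial : ℝ)
      = ((s i : ℝ) + 1) * ∏ j, ((s j).factorial : ℝ) := by
    rw [← Fintype.prod_ite_eq' i (fun _ => (s i : ℝ) + 1), ← prod_mul_distrib]
    refine prod_congr rfl fun j _ => ?_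
    rcases eq_or_ne i j with rfl | hij
    · simp [Nat.factorial_succ]
    · simp [hij.symm]
  rw [term, term, hsum, hprod, pow_succ]
  field_simp

theorem tsum_apply_mul_term (lam : ℝ) (x : ℤ) (i : Fin k) :
    ∑' t : Fin k → ℕ, (if (weight t : ℤ) = x then (t i : ℝ) * term k lam t else 0)
      = lam * poissonOrderK k lam (x - ((i : ℕ) + 1)) := by
  rw [poissonOrderK_eq_tsum, ← tsum_mul_left,
    ← (add_left_injective (Pi.single i 1 : Fin k → ℕ)).tsum_eq]
  · refine tsum_congr fun s => ?_
    simp only [weight_add_single, Pi.add_apply, Pi.single_eq_same, Nat.cast_add, Nat.cast_one,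
      term_add_single, mul_ite, mul_zero]
    congr 1
    apply propext
    omega
  · intro t ht
    have hti : t i ≠ 0 := fun h => ht (by simp [h])
    refine ⟨t - Pi.single i 1, funext fun j => ?_⟩
    rcases eq_or_ne j i with rfl | hji
    · simp only [Pi.add_apply, Pi.sub_apply, Pi.single_eq_same]
      omega
    · simp [hji]

theorem mul_poissonOrderK (k : ℕ) (lam : ℝ) (x : ℤ) :
    (x : ℝ) * poissonOrderK k lam x
      = lam * ∑ j ∈ range k, ((j : ℝ) + 1) * poissonOrderK k lam (x - 1 - j) := by
  have hweight (t : Fin k → ℕ) : (weight t : ℝ) = ∑ i : Fin k, ((i : ℝ) + 1) * t i := by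
    simp [weight]
  calc (x : ℝ) * poissonOrderK k lam x
      = ∑' t : Fin k → ℕ, ∑ i : Fin k, ((i : ℝ) + 1) *
          (if (weight t : ℤ) = x then (t i : ℝ) * term k lam t else 0) := by
        rw [poissonOrderK_eq_tsum, ← tsum_mul_left]
        refine tsum_congr fun t => ?_
        split_ifs with h
        · rw [← h, Int.cast_natCast, hweight, sum_mul]
          exact sum_congr rfl fun i _ => by ring
        · simp
    _ = ∑ i : Fin k, ((i : ℝ) + 1) * (lam * poissonOrderK k lam (x - ((i : ℕ) + 1))) := by
        rw [Summable.tsum_finsetSum fun i _ => (summable_ite_weight_eq x _).mul_left _]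
        simp only [tsum_mul_left, tsum_apply_mul_term]
    _ = _ := by
        rw [Fin.sum_univ_eq_sum_range
          (fun j => ((j : ℝ) + 1) * (lam * poissonOrderK k lam (x - (j + 1)))), mul_sum]
        refine sum_congr rfl fun j _ => ?_
        rw [sub_add_eq_sub_sub_swap]
        ring

theorem poissonOrderK_of_neg (k : ℕ) (lam : ℝ) {x : ℤ} (hx : x < 0) :
    poissonOrderK k lam x = 0 := by
  have (t : Fin k → ℕ) : (weight t : ℤ) ≠ x := by omega
  simp [poissonOrderK_eq_tsum, this]

theorem poissonOrderK_zero (k : ℕ) (lam : ℝ) :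
    poissonOrderK k lam 0 = Real.exp (-(k * lam)) := by
  rw [poissonOrderK_eq_tsum, tsum_eq_single 0 fun t ht => by simp [weight_eq_zero_iff, ht]]
  simp [weight, term]

end PoissonOrderK

section Recurrence

theorem sum_range_add_one_eq (k : ℕ) : ∑ j ∈ range k, ((j : ℝ) + 1) = k * (k + 1) / 2 := by
  induction k with
  | zero => simp
  | succ k ih =>
    rw [sum_range_succ, ih]
    push_cast
    ring

theorem sum_range_mul_sub_sum_range_mul_succ (a : ℕ → ℝ) (k : ℕ) :
    ∑ j ∈ range k, ((j : ℝ) + 1) * a j - ∑ j ∈ range k, ((j : ℝ) + 1) * a (j + 1)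
      = ∑ j ∈ range k, (a j - a k) := by
  have h1 := sum_range_succ' (fun j => (j : ℝ) * a j) k
  have h2 := sum_range_succ (fun j => (j : ℝ) * a j) k
  have h3 : ∑ j ∈ range k, ((j : ℝ) + 1) * a j
      = ∑ j ∈ range k, (j : ℝ) * a j + ∑ j ∈ range k, a j := by
    rw [← sum_add_distrib]
    exact sum_congr rfl fun j _ => by ring
  simp only [Nat.cast_add, Nat.cast_one, Nat.cast_zero, zero_mul, add_zero] at h1
  rw [sum_sub_distrib, sum_const, card_range, nsmul_eq_mul]
  linarith

theorem mul_mul_sub_eq_of_recurrence (a : ℕ → ℝ) (b n lam S : ℝ) (k : ℕ)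
    (hS : ∑ j ∈ range k, ((j : ℝ) + 1) = S)
    (hb : n * b = lam * ∑ j ∈ range k, ((j : ℝ) + 1) * a j)
    (ha : (n - 1) * a 0 = lam * ∑ j ∈ range k, ((j : ℝ) + 1) * a (j + 1)) :
    S * n * (b - a 0) = ((lam - 1) * S - (n - 1)) * a 0
      + lam * ∑ j ∈ range k, (S + j + 1) * (a (j + 1) - a k) := by
  have htel := sum_range_mul_sub_sum_range_mul_succ a k
  have hshift :
      ∑ j ∈ range k, (a j - a k) = ∑ j ∈ range k, (a (j + 1) - a k) + (a 0 - a k) := by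
    rw [← sum_range_succ' (fun j => a j - a k), sum_range_succ, sub_self, add_zero]
  have hW : ∑ j ∈ range k, (S + j + 1) * (a (j + 1) - a k)
      = S * ∑ j ∈ range k, (a (j + 1) - a k) + ∑ j ∈ range k, ((j : ℝ) + 1) * a (j + 1)
        - S * a k := by
    rw [← hS, mul_sum, sum_mul, ← sum_add_distrib, ← sum_sub_distrib]
    exact sum_congr rfl fun j _ => by ring
  rw [hW]
  linear_combination S * hb + S * lam * htel + S * lam * hshift + (1 - S) * ha

variable {P : ℤ → ℝ} {k : ℕ} {lam : ℝ}

theorem pred_lt_of_monotoneOn (hk : 0 < k) (hlam : 1 < lam)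
    (hrec : ∀ x : ℤ, (x : ℝ) * P x = lam * ∑ j ∈ range k, ((j : ℝ) + 1) * P (x - 1 - j))
    {n : ℤ} (hn : 1 ≤ n) (hn' : (n : ℝ) ≤ (lam - 1) * k * (k + 1) / 2 + 1)
    (hmono : MonotoneOn P (Set.Iic (n - 1))) (hpos : 0 < P (n - 1))
    (hstrict : 2 ≤ n → P (n - 1 - k) < P (n - 2)) :
    P (n - 1) < P n := by
  set S : ℝ := k * (k + 1) / 2
  set W := ∑ j ∈ range k, (S + j + 1) * (P (n - 1 - (j + 1)) - P (n - 1 - k))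
  have hS : 0 < S := by positivity
  have hrec' : ((n : ℝ) - 1) * P (n - 1 - (0 : ℕ))
      = lam * ∑ j ∈ range k, ((j : ℝ) + 1) * P (n - 1 - (j + 1 : ℕ)) := by
    have h := hrec (n - 1)
    push_cast at h ⊢
    rw [sub_zero, h]
    exact congrArg _ (sum_congr rfl fun j _ => by ring_nf)
  have key : S * n * (P n - P (n - 1)) = ((lam - 1) * S - (n - 1)) * P (n - 1) + lam * W := by
    simpa only [Nat.cast_add, Nat.cast_one, Nat.cast_zero, sub_zero] using
      mul_mul_sub_eq_of_recurrence (fun j => P (n - 1 - j)) (P n) n lam S k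
        (sum_range_add_one_eq k) (hrec n) hrec'
  have hW : ∀ j ∈ range k, 0 ≤ (S + j + 1) * (P (n - 1 - (j + 1)) - P (n - 1 - k)) := by
    intro j hj
    have := mem_range.1 hj
    have : P (n - 1 - k) ≤ P (n - 1 - (j + 1)) :=
      hmono (Set.mem_Iic.2 (by omega)) (Set.mem_Iic.2 (by omega)) (by omega)
    exact mul_nonneg (by positivity) (sub_nonneg.2 this)
  have hlam0 : 0 < lam := by linarith
  have hSn : 0 < S * n := mul_pos hS (by exact_mod_cast hn)
  refine sub_pos.1 (pos_of_mul_pos_right (key ▸ ?_) hSn.le)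
  rcases hn.eq_or_lt with hn1 | hn2
  · have hc : 0 < (lam - 1) * S - (n - 1) := by
      rw [← hn1, Int.cast_one, sub_self, sub_zero]
      exact mul_pos (sub_pos.2 hlam) hS
    exact add_pos_of_pos_of_nonneg (mul_pos hc hpos) (mul_nonneg hlam0.le (sum_nonneg hW))
  · have hc : 0 ≤ (lam - 1) * S - (n - 1) := by
      have : (lam - 1) * k * (k + 1) / 2 = (lam - 1) * S := by ring
      linarith
    have hW1 : 0 < W := by
      refine sum_pos' hW ⟨0, mem_range.2 (by omega), mul_pos (by positivity) (sub_pos.2 ?_)⟩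
      have h2 : n - 1 - (((0 : ℕ) : ℤ) + 1) = n - 2 := by push_cast; ring
      rw [h2]
      exact hstrict (by omega)
    exact add_pos_of_nonneg_of_pos (mul_nonneg hc hpos.le) (mul_pos hlam0 hW1)

theorem pred_lt_of_recurrence (hk : 2 ≤ k) (hlam : 1 < lam)
    (hrec : ∀ x : ℤ, (x : ℝ) * P x = lam * ∑ j ∈ range k, ((j : ℝ) + 1) * P (x - 1 - j))
    (hneg : ∀ x < 0, P x = 0) (h0 : 0 < P 0) (n : ℕ) (hn : 1 ≤ n)
    (hn' : (n : ℝ) ≤ (lam - 1) * k * (k + 1) / 2 + 1) :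
    P (n - 1) < P n := by
  induction n using Nat.strong_induction_on with
  | _ n ih =>
  have hstep : ∀ y : ℤ, 0 ≤ y → y ≤ n - 1 → P (y - 1) < P y := by
    intro y hy0 hy
    lift y to ℕ using hy0
    rcases Nat.eq_zero_or_pos y with rfl | hy1
    · simpa [hneg (-1) (by norm_num)] using h0
    · have : (y : ℝ) ≤ n := by exact_mod_cast (by omega : y ≤ n)
      exact ih y (by omega) hy1 (by linarith)
  have hmono : MonotoneOn P (Set.Iic ((n : ℤ) - 1)) := by
    refine monotoneOn_of_le_succ Set.ordConnected_Iic fun y _ _ hy => ?_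
    rw [Order.succ_eq_add_one, Set.mem_Iic] at *
    rcases lt_or_ge y (-1) with h | h
    · rw [hneg y (by omega), hneg (y + 1) (by omega)]
    · simpa using (hstep (y + 1) (by omega) hy).le
  refine pred_lt_of_monotoneOn (by omega) hlam hrec (by exact_mod_cast hn)
    (by exact_mod_cast hn') hmono ?_ fun hn2 => ?_
  · exact h0.trans_le (hmono (Set.mem_Iic.2 (by omega)) (Set.mem_Iic.2 le_rfl) (by omega))
  · calc P (n - 1 - k) ≤ P (n - 3) :=
          hmono (Set.mem_Iic.2 (by omega)) (Set.mem_Iic.2 (by omega)) (by omega)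
      _ < P (n - 2) := by simpa [sub_sub] using hstep (n - 2) (by omega) (by omega)

end Recurrence

theorem poissonOrderK_increasing (k : ℕ) (hk : 2 ≤ k) (lam : ℝ) (hlam : 1 < lam)
    (x : ℤ) (hx1 : 1 ≤ x) (hx2 : (x : ℝ) ≤ (lam - 1) * k * (k + 1) / 2 + 1) :
    0 < deltaOrderK k lam x := by
  lift x to ℕ using (by omega)
  have h0 : 0 < poissonOrderK k lam 0 := by
    rw [PoissonOrderK.poissonOrderK_zero]
    positivity
  exact sub_pos.2 (pred_lt_of_recurrence hk hlam (PoissonOrderK.mul_poissonOrderK k lam)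
    (fun _ => PoissonOrderK.poissonOrderK_of_neg k lam) h0 x (by exact_mod_cast hx1)
    (by exact_mod_cast hx2))
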